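/- arXiv:1002.0235 — 3 statements merged into one kernel-verified Lean document; each statement's English description precedes it below -/
import Mathlib

section
/- Let T, R be independent random points in ℝ^d with P(‖T − R‖ ≤ ρ) ≤ c_sep ρ^β for all ρ > 0, and let a be an attenuation function with a(ρ) ≤ c_dec ρ^{−α} (α, β, c_sep, c_dec > 0). Then the random variable S = (1/2)·log₂(1 + 2·a(‖T − R‖)) has finite expectation. -/
/-!
By the power-law decay of `a`, the rate is dominated by a constant plus a multiple of
`log⁺ (1 / ‖T - R‖)`. The small-ball bound gives `P(log⁺ (1 / ‖T - R‖) > t) ≤ c_sep e^{-βt}`,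
so this term is integrable by the layer-cake formula; the same bound shows `‖T - R‖ > 0` a.s.
-/

open MeasureTheory ProbabilityTheory

open Real Set Filter Topology

theorem Real.log_one_add_le_of_le_mul_rpow_neg {x a c α : ℝ} (hα : 0 ≤ α) (hx : 0 < x)
    (ha : 0 ≤ a) (hac : a ≤ c * x ^ (-α)) :
    log (1 + a) ≤ log (1 + c) + α * log⁺ x⁻¹ := by
  have hxα : 0 < x ^ (-α) := rpow_pos_of_pos hx _
  have hc : 0 ≤ c := nonneg_of_mul_nonneg_left (ha.trans hac) hxα
  rcases le_or_gt 1 x with hx1 | hx1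
  · have hpow : x ^ (-α) ≤ 1 := rpow_le_one_of_one_le_of_nonpos hx1 (by linarith)
    have hlog := log_le_log (by linarith) (by linarith [mul_le_of_le_one_right hc hpow] :
      1 + a ≤ 1 + c)
    nlinarith [posLog_nonneg (x := x⁻¹)]
  · have hpos : log⁺ x⁻¹ = -log x := by
      rw [posLog_eq_log (by rw [abs_inv, abs_of_pos hx]; exact one_le_inv_iff₀.2 ⟨hx, hx1.le⟩),
        log_inv]
    have hpow : 1 ≤ x ^ (-α) := one_le_rpow_of_pos_of_le_one_of_nonpos hx hx1.le (by linarith)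
    have hle : 1 + a ≤ (1 + c) * x ^ (-α) := by nlinarith
    calc log (1 + a) ≤ log ((1 + c) * x ^ (-α)) := log_le_log (by linarith) hle
      _ = log (1 + c) + α * log⁺ x⁻¹ := by
        rw [log_mul (by positivity) hxα.ne', log_rpow hx, hpos]; ring

theorem Real.le_exp_neg_of_lt_posLog_inv {x t : ℝ} (ht : 0 ≤ t) (h : t < log⁺ x⁻¹) :
    x ≤ exp (-t) := by
  rcases le_or_gt x 0 with hx | hx
  · exact hx.trans (exp_pos _).le
  · have : log x < -t := by
      rw [posLog_apply, log_inv, lt_max_iff] at h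
      rcases h with h | h <;> linarith
    exact ((log_lt_iff_lt_exp hx).1 this).le

theorem MeasureTheory.Integrable.of_meas_lt_le {Ω : Type*} [MeasurableSpace Ω] {μ : Measure Ω}
    {Y : Ω → ℝ} (hY : AEMeasurable Y μ) (hY0 : 0 ≤ᵐ[μ] Y) {g : ℝ → ℝ}
    (hg : IntegrableOn g (Ioi 0)) (htail : ∀ t > 0, μ {ω | t < Y ω} ≤ ENNReal.ofReal (g t)) :
    Integrable Y μ := by
  refine ⟨hY.aestronglyMeasurable, ?_⟩
  rw [hasFiniteIntegral_iff_ofReal hY0, lintegral_eq_lintegral_meas_lt μ hY0 hY]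
  calc ∫⁻ t in Ioi 0, μ {ω | t < Y ω} ≤ ∫⁻ t in Ioi 0, ENNReal.ofReal (g t) :=
        setLIntegral_mono' measurableSet_Ioi htail
    _ < ⊤ := hg.setLIntegral_lt_top

section SmallBall

variable {Ω : Type*} [MeasurableSpace Ω] {μ : Measure Ω} [IsFiniteMeasure μ] {X : Ω → ℝ}
  {c β : ℝ}

theorem ae_pos_of_measure_le_le_rpow (hβ : 0 < β)
    (hsep : ∀ ρ > 0, (μ {ω | X ω ≤ ρ}).toReal ≤ c * ρ ^ β) : ∀ᵐ ω ∂μ, 0 < X ω := by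
  have hlim : Tendsto (fun ρ : ℝ => c * ρ ^ β) (𝓝[>] 0) (𝓝 0) := by
    have := ((continuousAt_rpow_const 0 β (Or.inr hβ.le)).const_mul c).tendsto
    simpa [zero_rpow hβ.ne'] using this.mono_left nhdsWithin_le_nhds
  have hle : (μ {ω | X ω ≤ 0}).toReal ≤ 0 :=
    ge_of_tendsto hlim <| eventually_nhdsWithin_of_forall fun ρ hρ =>
      (ENNReal.toReal_mono (measure_ne_top _ _)
        (measure_mono fun ω (hω : X ω ≤ 0) => hω.trans (le_of_lt hρ))).trans (hsep ρ hρ)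
  have h0 : μ {ω | X ω ≤ 0} = 0 :=
    (ENNReal.toReal_eq_zero_iff _).1 (le_antisymm hle ENNReal.toReal_nonneg)
      |>.resolve_right (measure_ne_top _ _)
  exact ae_iff.2 (by simpa only [not_lt] using h0)

theorem integrable_posLog_inv_of_measure_le_le_rpow (hX : Measurable X) (hβ : 0 < β)
    (hsep : ∀ ρ > 0, (μ {ω | X ω ≤ ρ}).toReal ≤ c * ρ ^ β) :
    Integrable (fun ω => log⁺ (X ω)⁻¹) μ := by
  refine Integrable.of_meas_lt_le (by fun_prop) (ae_of_all _ fun _ => posLog_nonneg)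
    ((exp_neg_integrableOn_Ioi 0 hβ).const_mul c) fun t ht => ?_
  calc μ {ω | t < log⁺ (X ω)⁻¹} ≤ μ {ω | X ω ≤ exp (-t)} :=
        measure_mono fun ω hω => le_exp_neg_of_lt_posLog_inv ht.le hω
    _ = ENNReal.ofReal (μ {ω | X ω ≤ exp (-t)}).toReal :=
        (ENNReal.ofReal_toReal (measure_ne_top _ _)).symm
    _ ≤ ENNReal.ofReal (c * exp (-β * t)) := by
        refine ENNReal.ofReal_le_ofReal ((hsep _ (exp_pos _)).trans_eq ?_)
        rw [← exp_mul]; ring_nf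

end SmallBall

theorem stmt_3_general {Ω : Type*} [MeasurableSpace Ω] (μ : Measure Ω) [IsProbabilityMeasure μ]
    (d : ℕ) (T R : Ω → EuclideanSpace ℝ (Fin d))
    (hT : Measurable T) (hR : Measurable R)
    (csep β cdec α : ℝ) (hβ : 0 < β) (hα : 0 < α)
    (hsep : ∀ ρ > 0, (μ {ω | ‖T ω - R ω‖ ≤ ρ}).toReal ≤ csep * ρ ^ β)
    (a : ℝ → ℝ) (hanonneg : ∀ ρ, 0 ≤ a ρ) (hameas : Measurable a)
    (hdec : ∀ ρ > 0, a ρ ≤ cdec * ρ ^ (-α)) :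
    Integrable (fun ω => (1/2) * Real.logb 2 (1 + 2 * a ‖T ω - R ω‖)) μ := by
  have hX : Measurable fun ω => ‖T ω - R ω‖ := by fun_prop
  have hlog2 : 0 < log 2 := log_pos one_lt_two
  refine Integrable.mono'
    (((integrable_const (log (1 + 2 * cdec))).add
      ((integrable_posLog_inv_of_measure_le_le_rpow hX hβ hsep).const_mul α)).const_mul
      (2 * log 2)⁻¹)
    (Measurable.aestronglyMeasurable (by unfold logb; fun_prop)) ?_
  filter_upwards [ae_pos_of_measure_le_le_rpow hβ hsep] with ω hω
  have ha := hanonneg ‖T ω - R ω‖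
  have hS : (1/2) * logb 2 (1 + 2 * a ‖T ω - R ω‖)
      = (2 * log 2)⁻¹ * log (1 + 2 * a ‖T ω - R ω‖) := by
    rw [logb]; field_simp
  have hlog : 0 ≤ log (1 + 2 * a ‖T ω - R ω‖) := log_nonneg (by linarith)
  rw [hS, norm_of_nonneg (by positivity)]
  gcongr
  exact log_one_add_le_of_le_mul_rpow_neg hα.le hω (by positivity)
    (by simpa only [mul_assoc] using mul_le_mul_of_nonneg_left (hdec _ hω) zero_le_two)

theorem stmt_3 {Ω : Type*} [MeasurableSpace Ω] (μ : Measure Ω) [IsProbabilityMeasure μ]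
    (d : ℕ) (T R : Ω → EuclideanSpace ℝ (Fin d))
    (hT : Measurable T) (hR : Measurable R)
    (hindep : IndepFun T R μ)
    (csep β cdec α : ℝ) (hcsep : 0 < csep) (hβ : 0 < β) (hcdec : 0 < cdec) (hα : 0 < α)
    (hsep : ∀ ρ > 0, (μ {ω | ‖T ω - R ω‖ ≤ ρ}).toReal ≤ csep * ρ ^ β)
    (a : ℝ → ℝ) (hanonneg : ∀ ρ, 0 ≤ a ρ) (hameas : Measurable a)
    (hdec : ∀ ρ > 0, a ρ ≤ cdec * ρ ^ (-α)) :
    Integrable (fun ω => (1/2) * Real.logb 2 (1 + 2 * a ‖T ω - R ω‖)) μ :=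
  stmt_3_general μ d T R hT hR csep β cdec α hβ hα hsep a hanonneg hameas hdec
end

section
/- Let (T_i)_{i=1}^n and (R_i)_{i=1}^n be two independent i.i.d. families of random points in ℝ^d, and for i ≠ j define B_{ij} as the indicator of the event {S_ii ≤ t} ∩ {S_ij ≤ t} ∩ {S_jj ≤ S_ji}, where S_ij = f(‖T_i − R_j‖) for a fixed measurable function f. Then P(B_{ij} = 1) ≥ (1/2)·P({S_ii ≤ t} ∩ {S_ij ≤ t}). -/
/-!
Write `W = ((T i, T j), (R i, R j))` and let `W'` be `W` with `R i` and `R j` exchanged. Since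
`R i, R j` are i.i.d. and independent of `(T i, T j)`, `W` and `W'` have the same law. The event
`{S i i ≤ t, S i j ≤ t}` is invariant under the exchange, so, as `S j j ≤ S j i` or `S j i ≤ S j j`,
it is covered by the target event and its image under the exchange, which are equiprobable.
-/

open MeasureTheory ProbabilityTheory

namespace ProbabilityTheory

variable {Ω γ E F : Type*} {mΩ : MeasurableSpace Ω} {mγ : MeasurableSpace γ}
  {mE : MeasurableSpace E} {mF : MeasurableSpace F} {μ : Measure Ω}

lemma identDistrib_prodMk_prodMk_swap [IsFiniteMeasure μ] {X : Ω → F} {Y₁ Y₂ : Ω → E}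
    (hX : AEMeasurable X μ) (hXY : X ⟂ᵢ[μ] fun ω ↦ (Y₁ ω, Y₂ ω)) (hY : Y₁ ⟂ᵢ[μ] Y₂)
    (hident : IdentDistrib Y₁ Y₂ μ μ) :
    IdentDistrib (fun ω ↦ (X ω, Y₁ ω, Y₂ ω)) (fun ω ↦ (X ω, Y₂ ω, Y₁ ω)) μ μ :=
  (IdentDistrib.refl hX).prodMk (hident.prodMk hident.symm hY hY.symm) hXY
    (hXY.comp measurable_id measurable_swap)

lemma two_inv_mul_measure_le_of_subset_union {W W' : Ω → γ} (h : IdentDistrib W W' μ μ)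
    {C : Set γ} (hC : MeasurableSet C) {A : Set Ω} (hA : A ⊆ W ⁻¹' C ∪ W' ⁻¹' C) :
    2⁻¹ * μ A ≤ μ (W ⁻¹' C) := by
  have hA_le : μ A ≤ 2 * μ (W ⁻¹' C) :=
    calc μ A ≤ μ (W ⁻¹' C ∪ W' ⁻¹' C) := measure_mono hA
      _ ≤ μ (W ⁻¹' C) + μ (W' ⁻¹' C) := measure_union_le _ _
      _ = 2 * μ (W ⁻¹' C) := by rw [← h.measure_mem_eq hC, two_mul]
  rwa [ENNReal.inv_mul_le_iff two_ne_zero ENNReal.ofNat_ne_top]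

end ProbabilityTheory

theorem stmt_9_general {Ω : Type*} [MeasurableSpace Ω] (μ : Measure Ω) [IsProbabilityMeasure μ]
    (d n : ℕ) (T R : Fin n → Ω → EuclideanSpace ℝ (Fin d))
    (hTmeas : ∀ i, Measurable (T i)) (hRmeas : ∀ i, Measurable (R i))
    (hindep : iIndepFun
      (fun k : Fin n ⊕ Fin n => Sum.elim T R k) μ)
    (hRident : ∀ i j, IdentDistrib (R i) (R j) μ μ)
    (f : ℝ → ℝ) (hf : Measurable f)
    (S : Fin n → Fin n → Ω → ℝ) (hS : ∀ k l ω, S k l ω = f ‖T k ω - R l ω‖)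
    (i j : Fin n) (hij : i ≠ j) (t : ℝ) :
    μ {ω | S i i ω ≤ t ∧ S i j ω ≤ t ∧ S j j ω ≤ S j i ω} ≥
      2⁻¹ * μ {ω | S i i ω ≤ t ∧ S i j ω ≤ t} := by
  have hmeas : ∀ k, Measurable (Sum.elim T R k) := Sum.rec hTmeas hRmeas
  have hTR : (fun ω ↦ (T i ω, T j ω)) ⟂ᵢ[μ] fun ω ↦ (R i ω, R j ω) :=
    hindep.indepFun_prodMk_prodMk hmeas (.inl i) (.inl j) (.inr i) (.inr j)
      (by simp) (by simp) (by simp) (by simp)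
  have hRR : R i ⟂ᵢ[μ] R j := hindep.indepFun (i := .inr i) (j := .inr j) (by simp [hij])
  have hW := identDistrib_prodMk_prodMk_swap ((hTmeas i).prodMk (hTmeas j)).aemeasurable
    hTR hRR (hRident i j)
  let C : Set ((EuclideanSpace ℝ (Fin d) × EuclideanSpace ℝ (Fin d)) ×
      EuclideanSpace ℝ (Fin d) × EuclideanSpace ℝ (Fin d)) :=
    {x | f ‖x.1.1 - x.2.1‖ ≤ t ∧ f ‖x.1.1 - x.2.2‖ ≤ t ∧ f ‖x.1.2 - x.2.2‖ ≤ f ‖x.1.2 - x.2.1‖}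
  have hC : MeasurableSet C := by
    simp only [C, Set.ofPred_and]
    refine .inter (measurableSet_le ?_ ?_) (.inter (measurableSet_le ?_ ?_)
      (measurableSet_le ?_ ?_)) <;> fun_prop
  simp only [hS]
  refine two_inv_mul_measure_le_of_subset_union hW hC fun ω ⟨hSii, hSij⟩ ↦ ?_
  rcases le_total (f ‖T j ω - R j ω‖) (f ‖T j ω - R i ω‖) with h | h
  · exact .inl ⟨hSii, hSij, h⟩
  · exact .inr ⟨hSij, hSii, h⟩

theorem stmt_9 {Ω : Type*} [MeasurableSpace Ω] (μ : Measure Ω) [IsProbabilityMeasure μ]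
    (d n : ℕ) (T R : Fin n → Ω → EuclideanSpace ℝ (Fin d))
    (hTmeas : ∀ i, Measurable (T i)) (hRmeas : ∀ i, Measurable (R i))
    (hindep : iIndepFun
      (fun k : Fin n ⊕ Fin n => Sum.elim T R k) μ)
    (hTident : ∀ i j, IdentDistrib (T i) (T j) μ μ)
    (hRident : ∀ i j, IdentDistrib (R i) (R j) μ μ)
    (f : ℝ → ℝ) (hf : Measurable f)
    (S : Fin n → Fin n → Ω → ℝ) (hS : ∀ k l ω, S k l ω = f ‖T k ω - R l ω‖)
    (i j : Fin n) (hij : i ≠ j) (t : ℝ) :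
    μ {ω | S i i ω ≤ t ∧ S i j ω ≤ t ∧ S j j ω ≤ S j i ω} ≥
      2⁻¹ * μ {ω | S i i ω ≤ t ∧ S i j ω ≤ t} :=
  stmt_9_general μ d n T R hTmeas hRmeas hindep hRident f hf S hS i j hij t
end

section
/- Let T_i, T_j, R_i, R_j be independent random points in ℝ^d with T_i, T_j identically distributed and R_i, R_j identically distributed, and let f : ℝ_{≥0} → ℝ be measurable with S_{kl} = f(‖T_k − R_l‖). If t is such that P(S_ii ≤ t) > 0, then P({S_ii ≤ t} ∩ {S_ij ≤ t}) > 0. -/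
open MeasureTheory ProbabilityTheory
open scoped ENNReal

lemma lintegral_mul_self_pos_iff {α : Type*} [MeasurableSpace α] {ν : Measure α} {g : α → ℝ≥0∞}
    (hg : AEMeasurable g ν) :
    0 < ∫⁻ a, g a * g a ∂ν ↔ 0 < ∫⁻ a, g a ∂ν := by
  rw [pos_iff_ne_zero, pos_iff_ne_zero, ne_eq, ne_eq,
    lintegral_eq_zero_iff' (f := fun a ↦ g a * g a) (hg.mul hg), lintegral_eq_zero_iff' hg]
  refine not_congr ⟨fun h ↦ ?_, fun h ↦ ?_⟩ <;> filter_upwards [h] with a ha <;> simp_all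

section

variable {Ω α β : Type*} [MeasurableSpace Ω] [MeasurableSpace α] [MeasurableSpace β]
  {μ : Measure Ω} [IsFiniteMeasure μ] {X : Ω → α} {Y Z : Ω → β} {s : Set (α × β)}

lemma ProbabilityTheory.IndepFun.measure_prodMk_preimage_eq_lintegral (hXY : IndepFun X Y μ)
    (hX : AEMeasurable X μ) (hY : AEMeasurable Y μ) (hs : MeasurableSet s) :
    μ {ω | (X ω, Y ω) ∈ s} = ∫⁻ a, μ.map Y (Prod.mk a ⁻¹' s) ∂μ.map X := by
  have hmap := (indepFun_iff_map_prod_eq_prod_map_map hX hY).mp hXY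
  rw [← Measure.prod_apply hs, ← hmap, Measure.map_apply_of_aemeasurable (hX.prodMk hY) hs]
  rfl

/-- Conditionally on `X = a`, the events `(a, Y) ∈ s` and `(a, Z) ∈ s` are independent with the
same probability, so the probability of both is the square of that of one. -/
lemma measure_prodMk_preimage_inter_eq_lintegral_mul_self
    (hXYZ : IndepFun X (fun ω ↦ (Y ω, Z ω)) μ) (hYZ : IndepFun Y Z μ)
    (hident : IdentDistrib Y Z μ μ) (hX : AEMeasurable X μ)
    (hs : MeasurableSet s) :
    μ {ω | (X ω, Y ω) ∈ s ∧ (X ω, Z ω) ∈ s} =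
      ∫⁻ a, μ.map Y (Prod.mk a ⁻¹' s) * μ.map Y (Prod.mk a ⁻¹' s) ∂μ.map X := by
  have hY := hident.aemeasurable_fst
  have hZ := hident.aemeasurable_snd
  set S : Set (α × β × β) := {p | (p.1, p.2.1) ∈ s ∧ (p.1, p.2.2) ∈ s}
  have hS : MeasurableSet S :=
    (measurable_fst.prodMk (measurable_fst.comp measurable_snd) hs).inter
      (measurable_fst.prodMk (measurable_snd.comp measurable_snd) hs)
  have hmapYZ : μ.map (fun ω ↦ (Y ω, Z ω)) = (μ.map Y).prod (μ.map Y) := by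
    rw [(indepFun_iff_map_prod_eq_prod_map_map hY hZ).mp hYZ, hident.map_eq]
  calc μ {ω | (X ω, Y ω) ∈ s ∧ (X ω, Z ω) ∈ s}
      = ∫⁻ a, μ.map (fun ω ↦ (Y ω, Z ω)) (Prod.mk a ⁻¹' S) ∂μ.map X :=
        hXYZ.measure_prodMk_preimage_eq_lintegral hX (hY.prodMk hZ) hS
    _ = _ := by
        rw [hmapYZ]
        refine lintegral_congr fun a ↦ ?_
        exact Measure.prod_prod (Prod.mk a ⁻¹' s) (Prod.mk a ⁻¹' s)

lemma measure_prodMk_preimage_inter_pos (hXYZ : IndepFun X (fun ω ↦ (Y ω, Z ω)) μ)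
    (hYZ : IndepFun Y Z μ) (hident : IdentDistrib Y Z μ μ) (hX : AEMeasurable X μ)
    (hs : MeasurableSet s) (hpos : 0 < μ {ω | (X ω, Y ω) ∈ s}) :
    0 < μ {ω | (X ω, Y ω) ∈ s ∧ (X ω, Z ω) ∈ s} := by
  have hsection : Measurable fun a ↦ μ.map Y (Prod.mk a ⁻¹' s) :=
    measurable_measure_prodMk_left hs
  have hXY : IndepFun X Y μ := hXYZ.comp measurable_id measurable_fst
  rw [hXY.measure_prodMk_preimage_eq_lintegral hX hident.aemeasurable_fst hs] at hpos
  rwa [measure_prodMk_preimage_inter_eq_lintegral_mul_self hXYZ hYZ hident hX hs,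
    lintegral_mul_self_pos_iff hsection.aemeasurable]

end

theorem stmt_10_general {Ω : Type*} [MeasurableSpace Ω] (μ : Measure Ω) [IsProbabilityMeasure μ]
    (d : ℕ) (Ti Tj Ri Rj : Ω → EuclideanSpace ℝ (Fin d))
    (hmeas : ∀ k, Measurable (![Ti, Tj, Ri, Rj] k))
    (hindep : iIndepFun ![Ti, Tj, Ri, Rj] μ)
    (hRident : IdentDistrib Ri Rj μ μ)
    (f : ℝ → ℝ) (hf : Measurable f)
    (t : ℝ)
    (hpos : 0 < μ {ω | f ‖Ti ω - Ri ω‖ ≤ t}) :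
    0 < μ {ω | f ‖Ti ω - Ri ω‖ ≤ t ∧ f ‖Ti ω - Rj ω‖ ≤ t} := by
  have hs : MeasurableSet {p : EuclideanSpace ℝ (Fin d) × EuclideanSpace ℝ (Fin d) |
      f ‖p.1 - p.2‖ ≤ t} :=
    hf.comp (measurable_fst.sub measurable_snd).norm measurableSet_Iic
  exact measure_prodMk_preimage_inter_pos
    (hindep.indepFun_prodMk hmeas 2 3 0 (by decide) (by decide)).symm
    (hindep.indepFun (show (2 : Fin 4) ≠ 3 by decide)) hRident
    (hmeas 0).aemeasurable hs hpos

theorem stmt_10 {Ω : Type*} [MeasurableSpace Ω] (μ : Measure Ω) [IsProbabilityMeasure μ]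
    (d : ℕ) (Ti Tj Ri Rj : Ω → EuclideanSpace ℝ (Fin d))
    (hmeas : ∀ k, Measurable (![Ti, Tj, Ri, Rj] k))
    (hindep : iIndepFun ![Ti, Tj, Ri, Rj] μ)
    (hTident : IdentDistrib Ti Tj μ μ)
    (hRident : IdentDistrib Ri Rj μ μ)
    (f : ℝ → ℝ) (hf : Measurable f)
    (t : ℝ)
    (hpos : 0 < μ {ω | f ‖Ti ω - Ri ω‖ ≤ t}) :
    0 < μ {ω | f ‖Ti ω - Ri ω‖ ≤ t ∧ f ‖Ti ω - Rj ω‖ ≤ t} :=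
  stmt_10_general μ d Ti Tj Ri Rj hmeas hindep hRident f hf t hpos
end
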